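/- Let A = {a_1,…,a_p} be a finite subset of ℕ^m, where a_i = (a_{i1},…,a_{im}) for i = 1,…,p. For 0 ≤ ℓ ≤ p let Λ(ℓ,p) denote the set of all ℓ-element subsets of {1,…,p}, and for λ ∈ Λ(ℓ,p) let b_λ = Σ_{j=1}^m max{a_{ij} : i ∈ λ}. Then the Kolchin dimension polynomial of A is ω_A(t) = Σ_{ℓ=0}^p (−1)^ℓ Σ_{λ∈Λ(ℓ,p)} C(t + m − b_λ, m). -/

import Mathlib

set_option maxHeartbeats 1000000
set_option synthInstance.maxHeartbeats 1000000
set_option linter.unusedSectionVars false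

noncomputable section

variable (K : Type*) [Field K] [CharZero K]

/-! ### Numerical polynomials -/

/-- A polynomial `f ∈ ℚ[t]` is numerical if `f(s) ∈ ℤ` for all sufficiently large `s ∈ ℕ`. -/
def Numerical (f : Polynomial ℚ) : Prop :=
  ∃ N : ℕ, ∀ s : ℕ, N ≤ s → ∃ z : ℤ, f.eval (s : ℚ) = (z : ℚ)

/-- The binomial polynomial `C(t+i, i) = (t+1)(t+2)⋯(t+i)/i!`. -/
def binomPoly (i : ℕ) : Polynomial ℚ :=
  (i.factorial : ℚ)⁻¹ • ∏ k ∈ Finset.range i, (Polynomial.X + Polynomial.C ((k : ℚ) + 1))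

/-- The generalized binomial polynomial `C(t+c, m) = (t+c)(t+c-1)⋯(t+c-m+1)/m!` for `c ∈ ℤ`. -/
def genBinomPoly (c : ℤ) (m : ℕ) : Polynomial ℚ :=
  (m.factorial : ℚ)⁻¹ • ∏ k ∈ Finset.range m, (Polynomial.X + Polynomial.C ((c : ℚ) - (k : ℚ)))

/-! ### The Weyl algebra as a ring of operators -/

/-- The multiplication-by-`x_i` operator on `K[x_1,…,x_n]`. -/
def xOp (n : ℕ) (i : Fin n) : Module.End K (MvPolynomial (Fin n) K) :=
  LinearMap.mulLeft K (MvPolynomial.X i)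

/-- The partial derivative operator `∂_i` on `K[x_1,…,x_n]`. -/
def dOp (n : ℕ) (i : Fin n) : Module.End K (MvPolynomial (Fin n) K) :=
  (MvPolynomial.pderiv i).toLinearMap

/-- The `n`-th Weyl algebra `A_n(K)`: the `K`-subalgebra of `End_K K[X]` generated by the
multiplication operators `x_1,…,x_n` and the derivations `∂_1,…,∂_n`. -/
def weylAlgebra (n : ℕ) : Subalgebra K (Module.End K (MvPolynomial (Fin n) K)) :=
  Algebra.adjoin K (Set.range (xOp K n) ∪ Set.range (dOp K n))

/-- A (multi-index pair for a) monomial `x^α ∂^β` of the Weyl algebra. -/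
abbrev Mon (n : ℕ) := (Fin n → ℕ) × (Fin n → ℕ)

/-- The operator `x^α ∂^β = x_1^{α_1}⋯x_n^{α_n} ∂_1^{β_1}⋯∂_n^{β_n}`. -/
def weylMonomial (n : ℕ) (α β : Fin n → ℕ) : Module.End K (MvPolynomial (Fin n) K) :=
  (((List.finRange n).map fun i => xOp K n i ^ α i).prod) *
    (((List.finRange n).map fun i => dOp K n i ^ β i).prod)

lemma weylMonomial_mem (n : ℕ) (α β : Fin n → ℕ) :
    weylMonomial K n α β ∈ weylAlgebra K n := by
  apply mul_mem
  · apply list_prod_mem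
    intro x hx
    simp only [List.mem_map] at hx
    obtain ⟨i, -, rfl⟩ := hx
    exact pow_mem (Algebra.subset_adjoin (Set.mem_union_left _ (Set.mem_range_self i))) _
  · apply list_prod_mem
    intro x hx
    simp only [List.mem_map] at hx
    obtain ⟨i, -, rfl⟩ := hx
    exact pow_mem (Algebra.subset_adjoin (Set.mem_union_right _ (Set.mem_range_self i))) _

/-- The monomial `x^α ∂^β` as an element of the Weyl algebra. -/
def wMon (n : ℕ) (θ : Mon n) : ↥(weylAlgebra K n) :=
  ⟨weylMonomial K n θ.1 θ.2, weylMonomial_mem K n θ.1 θ.2⟩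

/-- The degree `|α| + |β|` of the monomial `x^α ∂^β`. -/
def monDeg {n : ℕ} (θ : Mon n) : ℕ := (∑ i, θ.1 i) + (∑ i, θ.2 i)

/-! ### Order and divisibility on monomials -/

/-- Lexicographic order on tuples of natural numbers. -/
def vecLexLT {N : ℕ} (v w : Fin N → ℕ) : Prop :=
  ∃ i, (∀ j, j < i → v j = w j) ∧ v i < w i

/-- The order on monomials of the Weyl algebra: compare `(deg, α_1,…,α_n, β_1,…,β_n)`
lexicographically. -/
def monLT {n : ℕ} (θ θ' : Mon n) : Prop :=
  monDeg θ < monDeg θ' ∨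
    (monDeg θ = monDeg θ' ∧ vecLexLT (Fin.append θ.1 θ.2) (Fin.append θ'.1 θ'.2))

def monLE {n : ℕ} (θ θ' : Mon n) : Prop := monLT θ θ' ∨ θ = θ'

/-- `x^α ∂^β` divides `x^γ ∂^δ` iff `α ≤ γ` and `β ≤ δ` componentwise. -/
def monDvd {n : ℕ} (θ θ' : Mon n) : Prop := θ.1 ≤ θ'.1 ∧ θ.2 ≤ θ'.2

/-- The quotient monomial `θ'/θ`. -/
def monQuot {n : ℕ} (θ' θ : Mon n) : Mon n := (θ'.1 - θ.1, θ'.2 - θ.2)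

/-- The least common multiple of two monomials. -/
def monLcm {n : ℕ} (θ θ' : Mon n) : Mon n := (θ.1 ⊔ θ'.1, θ.2 ⊔ θ'.2)

/-! ### The free module `E` over the Weyl algebra -/

/-- A free `A_n`-module with free generators `e_1,…,e_m`, realized as `A_n^m`. -/
abbrev EMod (n m : ℕ) := Fin m → ↥(weylAlgebra K n)

instance (n : ℕ) : Ring ↥(weylAlgebra K n) := inferInstance

instance (n : ℕ) : Algebra K ↥(weylAlgebra K n) := inferInstance

instance (n m : ℕ) : AddCommGroup (EMod K n m) := inferInstance

instance (n m : ℕ) : Module ↥(weylAlgebra K n) (EMod K n m) := inferInstance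

instance (n m : ℕ) : Module K (EMod K n m) := inferInstance

/-- A monomial `θ e_i` of `E` is a pair `(θ, i)`. -/
abbrev EMon (n m : ℕ) := Mon n × Fin m

/-- The monomial `θ e_i` as an element of `E`. -/
def emon {n m : ℕ} (w : EMon n m) : EMod K n m := Pi.single w.2 (wMon K n w.1)

/-- The order on monomials of `E`: `θ e_i < θ' e_j` iff `θ < θ'`, or `θ = θ'` and `i < j`. -/
def emonLT {n m : ℕ} (w w' : EMon n m) : Prop :=
  monLT w.1 w'.1 ∨ (w.1 = w'.1 ∧ w.2 < w'.2)

def emonLE {n m : ℕ} (w w' : EMon n m) : Prop := emonLT w w' ∨ w = w'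

/-- `θ e_i` divides `θ' e_j` iff `i = j` and `θ` divides `θ'`. -/
def emonDvd {n m : ℕ} (w w' : EMon n m) : Prop := w.2 = w'.2 ∧ monDvd w.1 w'.1

/-- `c` is the coordinate representation of `f ∈ E` in the `K`-basis of monomials of `E`. -/
def IsRepr {n m : ℕ} (f : EMod K n m) (c : EMon n m →₀ K) : Prop :=
  f = c.sum fun w k => k • emon K w

/-- The monomial `w` appears in `f` (with a nonzero coefficient). -/
def appearsIn {n m : ℕ} (f : EMod K n m) (w : EMon n m) : Prop :=
  ∃ c, IsRepr K f c ∧ w ∈ c.support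

/-- `w` is the leading monomial of `f` and `a` its leading coefficient. -/
def IsLead {n m : ℕ} (f : EMod K n m) (w : EMon n m) (a : K) : Prop :=
  ∃ c, IsRepr K f c ∧ w ∈ c.support ∧
    (∀ w' ∈ c.support, w' ≠ w → emonLT w' w) ∧ a = c w

/-- `w` is the leading monomial of `f`. -/
def IsLM {n m : ℕ} (f : EMod K n m) (w : EMon n m) : Prop := ∃ a, IsLead K f w a

/-- `f` is reduced with respect to `G`: `f = 0` or no monomial appearing in `f` is a multiple
of the leading monomial of an element of `G`. -/
def ReducedWrt {n m : ℕ} (f : EMod K n m) (G : Set (EMod K n m)) : Prop :=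
  f = 0 ∨ ∀ w, appearsIn K f w → ∀ g ∈ G, ∀ wg, IsLM K g wg → ¬ emonDvd wg w

/-- `h` is the S-polynomial `S(f,g)`. -/
def IsSPoly {n m : ℕ} (f g h : EMod K n m) : Prop :=
  ∃ wf af wg ag, IsLead K f wf af ∧ IsLead K g wg ag ∧
    ((wf.2 ≠ wg.2 ∧ h = 0) ∨
      (wf.2 = wg.2 ∧
        h = af⁻¹ • (wMon K n (monQuot (monLcm wf.1 wg.1) wf.1) • f)
          - ag⁻¹ • (wMon K n (monQuot (monLcm wf.1 wg.1) wg.1) • g)))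

/-- One-step reduction of `f` to `h` modulo `g`. -/
def ReduceStep {n m : ℕ} (g f h : EMod K n m) : Prop :=
  g ≠ 0 ∧ ∃ c : EMon n m →₀ K, IsRepr K f c ∧ ∃ w ∈ c.support, ∃ wg ag,
    IsLead K g wg ag ∧ emonDvd wg w ∧
    h = f - (c w * ag⁻¹) • (wMon K n (monQuot w.1 wg.1) • g)

/-- `f` reduces to `h` modulo the set `G` (finitely many one-step reductions). -/
def ReducesTo {n m : ℕ} (G : Set (EMod K n m)) (f h : EMod K n m) : Prop :=
  Relation.ReflTransGen (fun x y => ∃ g ∈ G, ReduceStep K g x y) f h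

/-- `g_1,…,g_s` is a Gröbner basis of the submodule `N` of `E`. -/
def IsGroebnerBasis {n m s : ℕ} (g : Fin s → EMod K n m)
    (N : Submodule (weylAlgebra K n) (EMod K n m)) : Prop :=
  (∀ i, g i ≠ 0) ∧ (∀ i, g i ∈ N) ∧
    ∀ f ∈ N, f ≠ 0 → ∀ w, IsLM K f w → ∃ i wi, IsLM K (g i) wi ∧ emonDvd wi w

/-! ### Bernstein filtration and Bernstein polynomials -/

/-- The Bernstein filtration `B_r` of the Weyl algebra: the `K`-span of the monomials of
degree at most `r`. -/
def BernsteinFil (n r : ℕ) : Submodule K ↥(weylAlgebra K n) :=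
  Submodule.span K {D : ↥(weylAlgebra K n) | ∃ θ : Mon n, monDeg θ ≤ r ∧ D = wMon K n θ}

/-- The filtration `M_r = Σ_i B_r f_i` of a module `M` generated by `f_1,…,f_p`. -/
def modFil (n : ℕ) {M : Type*} [AddCommGroup M] [Module (weylAlgebra K n) M]
    [Module K M] [IsScalarTower K (weylAlgebra K n) M] {p : ℕ}
    (f : Fin p → M) (r : ℕ) : Submodule K M :=
  Submodule.span K {x : M | ∃ i, ∃ D ∈ BernsteinFil K n r, x = D • f i}

/-- `χ` is the Bernstein polynomial of `M` associated with the system of generators `f`. -/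
def IsBernsteinOf (n : ℕ) {M : Type*} [AddCommGroup M] [Module (weylAlgebra K n) M]
    [Module K M] [IsScalarTower K (weylAlgebra K n) M] {p : ℕ}
    (f : Fin p → M) (χ : Polynomial ℚ) : Prop :=
  Submodule.span (weylAlgebra K n) (Set.range f) = ⊤ ∧ Numerical χ ∧
    ∃ N0 : ℕ, ∀ r : ℕ, N0 ≤ r →
      χ.eval (r : ℚ) = (Module.finrank K (modFil K n f r) : ℚ)

/-- `d = δ(M)`: `d` is the coefficient `a_{2n}` in the canonical representation
`χ(t) = Σ a_i C(t+i,i)` of a Bernstein polynomial of `M`. -/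
def HasDelta (n : ℕ) (M : Type*) [AddCommGroup M] [Module (weylAlgebra K n) M]
    [Module K M] [IsScalarTower K (weylAlgebra K n) M] (d : ℤ) : Prop :=
  ∃ (p : ℕ) (f : Fin p → M) (χ : Polynomial ℚ) (a : Fin (2*n+1) → ℤ),
    IsBernsteinOf K n f χ ∧ (χ = ∑ i, (a i : ℚ) • binomPoly (i : ℕ)) ∧
    d = a (Fin.last (2*n))

/-- A filtration of an `A_n`-module `P` with respect to the Bernstein filtration. -/
def IsWeylFiltration (n : ℕ) (P : Type*) [AddCommGroup P] [Module (weylAlgebra K n) P]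
    [Module K P] [IsScalarTower K (weylAlgebra K n) P]
    (Γ : ℕ → Submodule K P) : Prop :=
  (∀ r, Γ r ≤ Γ (r+1)) ∧ (∀ r, FiniteDimensional K (Γ r)) ∧ (⨆ r, Γ r) = ⊤ ∧
    ∀ r s : ℕ, ∀ D ∈ BernsteinFil K n r, ∀ x ∈ Γ s, D • x ∈ Γ (r+s)

/-- A good filtration: moreover `B_r Γ_s = Γ_{r+s}` for all `s ≥ s₀` and all `r`. -/
def IsGoodFiltration (n : ℕ) (P : Type*) [AddCommGroup P] [Module (weylAlgebra K n) P]
    [Module K P] [IsScalarTower K (weylAlgebra K n) P]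
    (Γ : ℕ → Submodule K P) : Prop :=
  IsWeylFiltration K n P Γ ∧
    ∃ s₀ : ℕ, ∀ s : ℕ, s₀ ≤ s → ∀ r : ℕ,
      Γ (r+s) ≤ Submodule.span K {y : P | ∃ D ∈ BernsteinFil K n r, ∃ x ∈ Γ s, y = D • x}

/-- The defining properties of the mapping `μ_U : B_U → ℤ ∪ {∞}` (on pairs from `U`). -/
def MuSpec (n : ℕ) (M : Type*) [AddCommGroup M] [Module (weylAlgebra K n) M]
    (U : Set (Submodule (weylAlgebra K n) M))
    (μ : Submodule (weylAlgebra K n) M → Submodule (weylAlgebra K n) M → WithTop ℤ) :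
    Prop :=
  (∀ N N', N ∈ U → N' ∈ U → N' ≤ N → ((-1 : ℤ) : WithTop ℤ) ≤ μ N N') ∧
    ∀ N N', N ∈ U → N' ∈ U → N' ≤ N → ∀ d : ℕ,
      (((d : ℤ) : WithTop ℤ) ≤ μ N N' ↔
        (N ≠ N' ∧ ∃ c : ℕ → Submodule (weylAlgebra K n) M,
          (∀ i, c i ∈ U) ∧ c 0 ≤ N ∧ (∀ i, c (i+1) ≤ c i) ∧ (∀ i, N' ≤ c i) ∧
          ∀ i, (((d : ℤ) - 1 : ℤ) : WithTop ℤ) ≤ μ (c i) (c (i+1))))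

/-!
`V_A(s)` consists of the points of weight at most `s` lying outside every upper set `a_i + ℕ^m`.
Inclusion–exclusion over the subsets `λ` reduces its size to counting points of weight at most `s`
above the componentwise maximum `max_{i ∈ λ} a_i`; by translation there are `C(s - b_λ + m, m)` of
them, which is the value at `s` of `C(t + m - b_λ, m)` as soon as `s ≥ b_λ`.
-/

open Finset

lemma genBinomPoly_eval_of_add_eq {c : ℤ} {m n : ℕ} {x : ℚ} (h : x + c = n) :
    (genBinomPoly c m).eval x = n.choose m := by
  rw [Nat.cast_choose_eq_descPochhammer_div, descPochhammer_eval_eq_prod_range, genBinomPoly,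
    Polynomial.eval_smul, Polynomial.eval_prod, smul_eq_mul, div_eq_inv_mul]
  congr 1
  refine prod_congr rfl fun k _ => ?_
  simp only [Polynomial.eval_add, Polynomial.eval_X, Polynomial.eval_C]
  rw [← h]
  ring

lemma ncard_sep_forall_not_eq_sum_powerset {α ι : Type*} {B : Set α} (hB : B.Finite)
    (s : Finset ι) (P : ι → α → Prop) :
    ({x ∈ B | ∀ i ∈ s, ¬ P i x}.ncard : ℤ) =
      ∑ t ∈ s.powerset, (-1) ^ #t * ({x ∈ B | ∀ i ∈ t, P i x}.ncard : ℤ) := by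
  classical
  lift B to Finset α using hB
  have hcoe (q : α → Prop) : {x ∈ (B : Set α) | q x} = ↑(B.filter q) := by
    ext
    simp
  simp only [hcoe, Set.ncard_coe_finset, card_filter, Nat.cast_sum, Nat.cast_ite,
    Nat.cast_one, Nat.cast_zero, mul_sum]
  rw [sum_comm]
  refine sum_congr rfl fun x _ => ?_
  have hsub : {t ∈ s.powerset | ∀ i ∈ t, P i x} = (s.filter (P · x)).powerset := by
    ext t
    simp only [mem_filter, mem_powerset, subset_iff]
    grind
  simp only [mul_ite, mul_one, mul_zero]
  rw [← sum_filter, hsub, sum_powerset_neg_one_pow_card]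
  exact if_congr filter_eq_empty_iff.symm rfl rfl

def sumLeTuples (m s : ℕ) : Finset (Fin m → ℕ) :=
  (Fintype.piFinset fun _ => range (s + 1)).filter fun v => ∑ j, v j ≤ s

lemma mem_sumLeTuples {m s : ℕ} {v : Fin m → ℕ} : v ∈ sumLeTuples m s ↔ ∑ j, v j ≤ s := by
  simp only [sumLeTuples, mem_filter, Fintype.mem_piFinset, mem_range, Nat.lt_succ_iff,
    and_iff_right_iff_imp]
  exact fun h j => (single_le_sum (fun i _ => Nat.zero_le (v i)) (mem_univ j)).trans h

lemma coe_sumLeTuples (m s : ℕ) : (sumLeTuples m s : Set (Fin m → ℕ)) = {v | ∑ j, v j ≤ s} :=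
  Set.ext fun _ => mem_sumLeTuples

lemma card_sumLeTuples (m s : ℕ) : #(sumLeTuples m s) = (s + m).choose m := by
  induction m generalizing s with
  | zero =>
    rw [Nat.choose_zero_right, card_eq_one]
    exact ⟨0, eq_singleton_iff_unique_mem.2
      ⟨by simp [mem_sumLeTuples], fun v _ => Subsingleton.elim _ _⟩⟩
  | succ m ih =>
    have hsplit : #(sumLeTuples (m + 1) s) =
        #((range (s + 1)).sigma fun t => sumLeTuples m (s - t)) := by
      refine card_nbij' (fun v => ⟨v 0, Fin.tail v⟩) (fun w => Fin.cons w.1 w.2) ?_ ?_ ?_ ?_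
      · intro v hv
        simp only [coe_sigma, Set.mem_sigma_iff, coe_range, Set.mem_Iio, mem_coe,
          mem_sumLeTuples] at hv ⊢
        rw [Fin.sum_univ_succ] at hv
        exact ⟨by omega, by simp only [Fin.tail]; omega⟩
      · intro w hw
        simp only [coe_sigma, Set.mem_sigma_iff, coe_range, Set.mem_Iio, mem_coe,
          mem_sumLeTuples] at hw ⊢
        rw [Fin.sum_univ_succ]
        simp only [Fin.cons_zero, Fin.cons_succ]
        omega
      · intro v _; exact Fin.cons_self_tail v
      · intro w _; simp
    have hreflect := sum_range_reflect (fun t => (t + m).choose m) (s + 1)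
    rw [add_tsub_cancel_right] at hreflect
    rw [hsplit, card_sigma, sum_congr rfl fun t _ => ih (s - t), hreflect,
      Nat.sum_range_add_choose, add_assoc]

lemma ncard_setOf_sum_le (m s : ℕ) : {v : Fin m → ℕ | ∑ j, v j ≤ s}.ncard = (s + m).choose m := by
  rw [← coe_sumLeTuples, Set.ncard_coe_finset, card_sumLeTuples]

lemma ncard_setOf_le_and_sum_le {m s : ℕ} (c : Fin m → ℕ) (hc : ∑ j, c j ≤ s) :
    {v | c ≤ v ∧ ∑ j, v j ≤ s}.ncard = (s - ∑ j, c j + m).choose m := by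
  have himage : {v | c ≤ v ∧ ∑ j, v j ≤ s} = (· + c) '' {w | ∑ j, w j ≤ s - ∑ j, c j} := by
    ext v
    constructor
    · rintro ⟨hcv, hv⟩
      refine ⟨v - c, ?_, tsub_add_cancel_of_le hcv⟩
      simp only [Set.mem_ofPred_eq, Pi.sub_apply]
      rw [sum_tsub_distrib _ fun j _ => hcv j]
      omega
    · rintro ⟨w, hw, rfl⟩
      simp only [Set.mem_ofPred_eq, Pi.add_apply, sum_add_distrib] at hw ⊢
      exact ⟨le_add_self, by omega⟩
  rw [himage, Set.ncard_image_of_injective _ (add_left_injective c), ncard_setOf_sum_le]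

lemma ncard_setOf_forall_not_le_and_sum_le {ι : Type*} [Fintype ι] {m s : ℕ}
    (a : ι → Fin m → ℕ) (hs : ∀ lam : Finset ι, ∑ j, lam.sup a j ≤ s) :
    ({v | (∀ i, ¬ a i ≤ v) ∧ ∑ j, v j ≤ s}.ncard : ℤ) =
      ∑ lam ∈ univ.powerset, (-1) ^ #lam * ((s - ∑ j, lam.sup a j + m).choose m : ℤ) := by
  have hfin : {v : Fin m → ℕ | ∑ j, v j ≤ s}.Finite := by
    rw [← coe_sumLeTuples]
    exact finite_toSet _
  convert ncard_sep_forall_not_eq_sum_powerset hfin univ (fun i v => a i ≤ v) using 3 with lam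
  · ext v
    simp [and_comm]
  · rw [← ncard_setOf_le_and_sum_le _ (hs lam)]
    congr 2
    ext v
    simp [Finset.sup_le_iff, and_comm]

theorem kolchin_polynomial_formula_general (m p : ℕ) (a : Fin p → Fin m → ℕ) :
    ∃ N0 : ℕ, ∀ s : ℕ, N0 ≤ s →
      (Set.ncard {v : Fin m → ℕ | (∀ i, ¬ a i ≤ v) ∧ (∑ j, v j) ≤ s} : ℚ) =
        Polynomial.eval (s : ℚ)
          (∑ l ∈ Finset.range (p+1), (-1 : ℚ)^l •
            ∑ lam ∈ Finset.powersetCard l (Finset.univ : Finset (Fin p)),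
              genBinomPoly ((m : ℤ) - ∑ j, ((lam.sup fun i => a i j : ℕ) : ℤ)) m) := by
  refine ⟨∑ j, univ.sup a j, fun s hs => ?_⟩
  have hb (lam : Finset (Fin p)) : ∑ j, lam.sup a j ≤ s :=
    (sum_le_sum fun j _ => Finset.sup_mono (f := a) (subset_univ lam) j).trans hs
  rw [← Int.cast_natCast, ncard_setOf_forall_not_le_and_sum_le a hb, Polynomial.eval_finsetSum,
    sum_powerset, card_univ, Fintype.card_fin]
  push_cast
  refine sum_congr rfl fun l _ => ?_
  rw [Polynomial.eval_smul, smul_eq_mul, Polynomial.eval_finsetSum, mul_sum]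
  refine sum_congr rfl fun lam hlam => ?_
  have hlam_le := hb lam
  rw [(mem_powersetCard.1 hlam).2, genBinomPoly_eval_of_add_eq]
  simp only [Finset.sup_apply] at hlam_le ⊢
  push_cast [hlam_le]
  ring

/-- Explicit formula for the Kolchin dimension polynomial of a finite set
`A = {a_1,…,a_p} ⊆ ℕ^m`: for all sufficiently large `s`,
`Card V_A(s) = Σ_{ℓ=0}^p (−1)^ℓ Σ_{λ ∈ Λ(ℓ,p)} C(s + m − b_λ, m)`,
where `b_λ = Σ_{j=1}^m max{a_{ij} : i ∈ λ}`. -/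
theorem kolchin_polynomial_formula (m p : ℕ) (a : Fin p → Fin m → ℕ)
    (hinj : Function.Injective a) :
    ∃ N0 : ℕ, ∀ s : ℕ, N0 ≤ s →
      (Set.ncard {v : Fin m → ℕ | (∀ i, ¬ a i ≤ v) ∧ (∑ j, v j) ≤ s} : ℚ) =
        Polynomial.eval (s : ℚ)
          (∑ l ∈ Finset.range (p+1), (-1 : ℚ)^l •
            ∑ lam ∈ Finset.powersetCard l (Finset.univ : Finset (Fin p)),
              genBinomPoly ((m : ℤ) - ∑ j, ((lam.sup fun i => a i j : ℕ) : ℤ)) m) :=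
  kolchin_polynomial_formula_general m p a
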